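/- arXiv:2507.20062 — 2 statements merged into one kernel-verified Lean document; each statement's English description precedes it below -/
import Mathlib

section
/- The example series ∑_{n=0}^∞ a_n violates both ST_P and ST_N: for every k ∈ ℕ, every ε > 0, and every i_0 ∈ ℕ, there exists i > i_0 with S_{[P_i, P_{i+k}]} < ε, and there exists i > i_0 with S_{[N_i, N_{i+k}]} > −ε. -/
open Filter Finset

noncomputable section
open scoped Classical

/-- Partial sum of the series `∑ a n`: sum of the first `n` terms. -/
def partialSum (a : ℕ → ℝ) (n : ℕ) : ℝ := ∑ i ∈ Finset.range n, a i

/-- The series `∑ a n` converges to `L`. -/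
def ConvergesTo (a : ℕ → ℝ) (L : ℝ) : Prop :=
  Filter.Tendsto (partialSum a) Filter.atTop (nhds L)

/-- The series `∑ a n` converges. -/
def Converges (a : ℕ → ℝ) : Prop := ∃ L : ℝ, ConvergesTo a L

/-- The series `∑ a n` is conditionally divergent: it diverges, but some
rearrangement of it converges. -/
def CondDivergent (a : ℕ → ℝ) : Prop :=
  ¬ Converges a ∧ ∃ σ : Equiv.Perm ℕ, Converges (fun n => a (σ n))

/-- `σ` is a type R permutation of the series `∑ a n`: it preserves the relative
order of terms of the same sign. -/
def IsTypeR (a : ℕ → ℝ) (σ : Equiv.Perm ℕ) : Prop :=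
  ∀ i j : ℕ, σ i < σ j →
    ((0 < a (σ i) ∧ 0 < a (σ j)) ∨ (a (σ i) ≤ 0 ∧ a (σ j) ≤ 0)) → i < j

/-- The number of maximal integer intervals whose union is the finite set `s`
(= the number of `x ∈ s` with `x + 1 ∉ s`). -/
def blockCount (s : Finset ℕ) : ℕ := (s.filter (fun x => x + 1 ∉ s)).card

/-- `σ` has bounded block number `C`: at every stage `n`, the set
`σ '' {0, 1, …, n}` is a union of at most `C` maximal integer intervals. -/
def HasBBN (σ : Equiv.Perm ℕ) (C : ℕ) : Prop :=
  ∀ n : ℕ, blockCount ((Finset.range (n + 1)).image σ) ≤ C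

/-- `σ` is a type R λ-permutation of the series `∑ a n`: a type R permutation
with bounded block number whose rearranged series converges. -/
def IsTypeRLambda (a : ℕ → ℝ) (σ : Equiv.Perm ℕ) : Prop :=
  IsTypeR a σ ∧ (∃ C : ℕ, HasBBN σ C) ∧ Converges (fun n => a (σ n))

/-- The set of sums attainable by type R λ-permutations of `∑ a n`. -/
def ZR (a : ℕ → ℝ) : Set ℝ :=
  {r : ℝ | ∃ σ : Equiv.Perm ℕ, IsTypeRLambda a σ ∧ ConvergesTo (fun n => a (σ n)) r}

/-- The first element `p_i` of the `i`-th positive block `P_i` (blocks 1-indexed):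
the `i`-th index `n` with `a n > 0` which starts a maximal interval of positive terms. -/
def posStartIdx (a : ℕ → ℝ) (i : ℕ) : ℕ :=
  Nat.nth (fun n => 0 < a n ∧ (n = 0 ∨ a (n - 1) ≤ 0)) (i - 1)

/-- The last element `q_i` of the `i`-th positive block `P_i` (blocks 1-indexed). -/
def posEndIdx (a : ℕ → ℝ) (i : ℕ) : ℕ :=
  Nat.nth (fun n => 0 < a n ∧ a (n + 1) ≤ 0) (i - 1)

/-- The first element `n_i` of the `i`-th negative block `N_i` (blocks 1-indexed). -/
def negStartIdx (a : ℕ → ℝ) (i : ℕ) : ℕ :=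
  Nat.nth (fun n => a n ≤ 0 ∧ (n = 0 ∨ 0 < a (n - 1))) (i - 1)

/-- The last element `m_i` of the `i`-th negative block `N_i` (blocks 1-indexed). -/
def negEndIdx (a : ℕ → ℝ) (i : ℕ) : ℕ :=
  Nat.nth (fun n => a n ≤ 0 ∧ 0 < a (n + 1)) (i - 1)

/-- `S_{[P_i, P_j]}`: the sum of the terms of `∑ a n` lying in the positive blocks
`P_i ∪ ⋯ ∪ P_j` (interpreted as `0` when `j < i`). -/
def SP (a : ℕ → ℝ) (i j : ℕ) : ℝ :=
  if j < i then 0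
  else ∑ n ∈ Finset.Icc (posStartIdx a i) (posEndIdx a j), if 0 < a n then a n else 0

/-- `S_{[N_i, N_j]}`: the sum of the terms of `∑ a n` lying in the negative blocks
`N_i ∪ ⋯ ∪ N_j` (interpreted as `0` when `j < i`). -/
def SN (a : ℕ → ℝ) (i j : ℕ) : ℝ :=
  if j < i then 0
  else ∑ n ∈ Finset.Icc (negStartIdx a i) (negEndIdx a j), if a n ≤ 0 then a n else 0

/-- The substantial property on positive blocks. -/
def STP (a : ℕ → ℝ) : Prop :=
  ∃ k : ℕ, ∃ ε : ℝ, 0 < ε ∧ ∃ i0 : ℕ, ∀ i > i0, SP a i (i + k) ≥ ε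

/-- The substantial property on negative blocks. -/
def STN (a : ℕ → ℝ) : Prop :=
  ∃ k : ℕ, ∃ ε : ℝ, 0 < ε ∧ ∃ i0 : ℕ, ∀ i > i0, SN a i (i + k) ≤ -ε
/-- Length of the `k`-th block of the example series: `2k` if `k` is a perfect
square, otherwise `2`. -/
def exBlockLen (k : ℕ) : ℕ := if Nat.sqrt k * Nat.sqrt k = k then 2 * k else 2

/-- Starting index (in the example series) of the `k`-th block (`k ≥ 1`). -/
def exBlockStart (k : ℕ) : ℕ := ∑ j ∈ Finset.Ico 1 k, exBlockLen j

/-- The index `k ≥ 1` of the block containing position `n` of the example series. -/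
def exBlockIdx (n : ℕ) : ℕ := Nat.findGreatest (fun k => exBlockStart k ≤ n) (n + 1)

/-- The example series: the concatenation, for `k = 1, 2, 3, …`, of the blocks
`B_k`, where `B_k` consists of `k` copies of `1/k` followed by `k` copies of
`-1/k` if `k` is a perfect square, and `B_k = (1/k, -1/k)` otherwise. -/
def exA (n : ℕ) : ℝ :=
  let k := exBlockIdx n
  let o := n - exBlockStart k
  if Nat.sqrt k * Nat.sqrt k = k then
    (if o < k then (1 : ℝ) / (k : ℝ) else -((1 : ℝ) / (k : ℝ)))
  else (if o = 0 then (1 : ℝ) / (k : ℝ) else -((1 : ℝ) / (k : ℝ)))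


/-! ### Auxiliary development -/

/-- Length of the positive run in block `k`. -/
def exPosLen (k : ℕ) : ℕ := if Nat.sqrt k * Nat.sqrt k = k then k else 1

lemma exPosLen_pos {k : ℕ} (hk : 1 ≤ k) : 1 ≤ exPosLen k := by
  unfold exPosLen; split <;> omega

lemma two_le_exBlockLen {k : ℕ} (hk : 1 ≤ k) : 2 ≤ exBlockLen k := by
  unfold exBlockLen; split <;> omega

lemma exPosLen_lt_len {k : ℕ} (hk : 1 ≤ k) : exPosLen k < exBlockLen k := by
  unfold exPosLen exBlockLen; split <;> omega

lemma exStart_succ (k : ℕ) : exBlockStart (k + 1) = exBlockStart k + exBlockLen k := by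
  rcases Nat.eq_zero_or_pos k with h | h
  · subst h
    simp [exBlockStart, exBlockLen]
  · unfold exBlockStart
    rw [Finset.sum_Ico_succ_top h]

lemma exStart_mono : Monotone exBlockStart := by
  intro a b hab
  exact Finset.sum_le_sum_of_subset (Finset.Ico_subset_Ico le_rfl hab)

lemma exStart_ge (k : ℕ) : 2 * k ≤ exBlockStart (k + 1) := by
  induction k with
  | zero => omega
  | succ n ih =>
    rw [exStart_succ]
    have := two_le_exBlockLen (k := n + 1) (by omega)
    omega

lemma exStart_add_two {k : ℕ} (hk : 1 ≤ k) :
    exBlockStart k + 2 ≤ exBlockStart (k + 1) := by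
  rw [exStart_succ]
  have := two_le_exBlockLen hk
  omega

lemma le_blockIdx {i n : ℕ} (hi : 1 ≤ i) (h : exBlockStart i ≤ n) : i ≤ exBlockIdx n := by
  have h2 : 2 * (i - 1) ≤ exBlockStart i := by
    have h3 := exStart_ge (i - 1)
    have h4 : i - 1 + 1 = i := by omega
    rw [h4] at h3
    exact h3
  exact Nat.le_findGreatest (by omega) h

lemma blockIdx_pos (n : ℕ) : 1 ≤ exBlockIdx n := by
  apply le_blockIdx le_rfl
  simp [exBlockStart]

lemma blockIdx_start_le (n : ℕ) : exBlockStart (exBlockIdx n) ≤ n := by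
  have : exBlockStart 1 ≤ n := by simp [exBlockStart]
  exact Nat.findGreatest_spec (P := fun k => exBlockStart k ≤ n) (m := 1) (by omega) this

lemma lt_start_succ_blockIdx (n : ℕ) : n < exBlockStart (exBlockIdx n + 1) := by
  by_contra h
  push_neg at h
  have h1 := le_blockIdx (i := exBlockIdx n + 1) (by omega) h
  omega

lemma blockIdx_eq {k n : ℕ} (hk : 1 ≤ k) (h1 : exBlockStart k ≤ n)
    (h2 : n < exBlockStart (k + 1)) : exBlockIdx n = k := by
  have ha := blockIdx_start_le n
  have hb := lt_start_succ_blockIdx n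
  have hp := blockIdx_pos n
  rcases lt_trichotomy (exBlockIdx n) k with h | h | h
  · have : exBlockStart (exBlockIdx n + 1) ≤ exBlockStart k := exStart_mono (by omega)
    omega
  · exact h
  · have : exBlockStart (k + 1) ≤ exBlockStart (exBlockIdx n) := exStart_mono (by omega)
    omega

lemma exA_formula {k o : ℕ} (hk : 1 ≤ k) (ho : o < exBlockLen k) :
    exA (exBlockStart k + o) = if o < exPosLen k then (1 : ℝ) / k else -((1 : ℝ) / k) := by
  have hidx : exBlockIdx (exBlockStart k + o) = k := by
    apply blockIdx_eq hk (Nat.le_add_right _ _)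
    rw [exStart_succ]; omega
  unfold exA exPosLen
  simp only [hidx, Nat.add_sub_cancel_left]
  by_cases hs : Nat.sqrt k * Nat.sqrt k = k
  · simp only [hs, if_true]
  · simp only [hs, if_false]
    rcases Nat.eq_zero_or_pos o with h | h
    · simp [h]
    · have : ¬ (o = 0) := by omega
      have h1 : ¬ (o < 1) := by omega
      simp [this, h1]

lemma one_div_k_pos {k : ℕ} (hk : 1 ≤ k) : (0 : ℝ) < 1 / k := by
  have : (0 : ℝ) < k := by exact_mod_cast hk
  positivity

lemma exA_pos_iff {k o : ℕ} (hk : 1 ≤ k) (ho : o < exBlockLen k) :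
    0 < exA (exBlockStart k + o) ↔ o < exPosLen k := by
  rw [exA_formula hk ho]
  have h1 := one_div_k_pos hk
  split <;> constructor <;> intro h <;> first | assumption | linarith

lemma exists_rep (n : ℕ) : ∃ k o, 1 ≤ k ∧ o < exBlockLen k ∧ n = exBlockStart k + o := by
  refine ⟨exBlockIdx n, n - exBlockStart (exBlockIdx n), blockIdx_pos n, ?_, ?_⟩
  · have h1 := blockIdx_start_le n
    have h2 := lt_start_succ_blockIdx n
    rw [exStart_succ] at h2
    omega
  · have := blockIdx_start_le n
    omega

lemma exA_pos_eq {n : ℕ} (h : 0 < exA n) : exA n = 1 / (exBlockIdx n : ℝ) := by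
  obtain ⟨k, o, hk, ho, rfl⟩ := exists_rep n
  have hidx : exBlockIdx (exBlockStart k + o) = k := by
    apply blockIdx_eq hk (Nat.le_add_right _ _)
    rw [exStart_succ]; omega
  rw [hidx]
  rw [exA_formula hk ho] at h ⊢
  have h1 := one_div_k_pos hk
  split at h
  · split <;> first | rfl | linarith
  · linarith

lemma exA_neg_eq {n : ℕ} (h : exA n ≤ 0) : exA n = -(1 / (exBlockIdx n : ℝ)) := by
  obtain ⟨k, o, hk, ho, rfl⟩ := exists_rep n
  have hidx : exBlockIdx (exBlockStart k + o) = k := by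
    apply blockIdx_eq hk (Nat.le_add_right _ _)
    rw [exStart_succ]; omega
  rw [hidx]
  rw [exA_formula hk ho] at h ⊢
  have h1 := one_div_k_pos hk
  split at h
  · linarith
  · split <;> first | rfl | linarith

lemma nth_eq_of_strictMono {p : ℕ → Prop} (f : ℕ → ℕ) (hf : StrictMono f)
    (h1 : ∀ n, p (f n)) (h2 : ∀ n, p n → ∃ k, f k = n) (n : ℕ) :
    Nat.nth p n = f n := by
  have hc : Nat.count p (f n) = n := by
    rw [Nat.count_eq_card_filter_range]
    have himg : Finset.filter p (Finset.range (f n)) = (Finset.range n).image f := by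
      ext m
      simp only [Finset.mem_filter, Finset.mem_range, Finset.mem_image]
      constructor
      · rintro ⟨hm, hpm⟩
        obtain ⟨j, rfl⟩ := h2 m hpm
        exact ⟨j, hf.lt_iff_lt.1 hm, rfl⟩
      · rintro ⟨j, hj, rfl⟩
        exact ⟨hf hj, h1 j⟩
    rw [himg, Finset.card_image_of_injective _ hf.injective, Finset.card_range]
  have h3 := Nat.nth_count (p := p) (h1 n)
  rw [hc] at h3
  exact h3


lemma exStart_one : exBlockStart 1 = 0 := by simp [exBlockStart]

lemma not_pos_exA {k o : ℕ} (hk : 1 ≤ k) (ho : o < exBlockLen k) (h : exPosLen k ≤ o) :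
    exA (exBlockStart k + o) ≤ 0 := by
  by_contra hc
  push_neg at hc
  exact absurd ((exA_pos_iff hk ho).1 hc) (by omega)

lemma posStartIdx_exA {i : ℕ} (hi : 1 ≤ i) : posStartIdx exA i = exBlockStart i := by
  have hmono : StrictMono (fun j => exBlockStart (j + 1)) := by
    apply strictMono_nat_of_lt_succ
    intro j
    have := exStart_add_two (k := j + 1) (by omega)
    omega
  have hmem : ∀ j, (0 < exA (exBlockStart (j + 1)) ∧
      (exBlockStart (j + 1) = 0 ∨ exA (exBlockStart (j + 1) - 1) ≤ 0)) := by
    intro j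
    constructor
    · have := (exA_pos_iff (k := j + 1) (o := 0) (by omega)
        (by have := two_le_exBlockLen (k := j + 1) (by omega); omega)).2
        (exPosLen_pos (by omega))
      simpa using this
    · rcases Nat.eq_zero_or_pos j with rfl | hj
      · left; exact exStart_one
      · right
        have hs : exBlockStart (j + 1) = exBlockStart j + exBlockLen j := exStart_succ j
        have hlen := two_le_exBlockLen (k := j) hj
        have hlt := exPosLen_lt_len (k := j) hj
        have he : exBlockStart (j + 1) - 1 = exBlockStart j + (exBlockLen j - 1) := by omega
        rw [he]
        exact not_pos_exA hj (by omega) (by omega)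
  have hsurj : ∀ n, (0 < exA n ∧ (n = 0 ∨ exA (n - 1) ≤ 0)) →
      ∃ j, exBlockStart (j + 1) = n := by
    rintro n ⟨hpos, hprev⟩
    obtain ⟨k, o, hk, ho, rfl⟩ := exists_rep n
    have hoL : o < exPosLen k := (exA_pos_iff hk ho).1 hpos
    rcases Nat.eq_zero_or_pos o with rfl | hop
    · exact ⟨k - 1, by rw [show k - 1 + 1 = k from by omega]; omega⟩
    · exfalso
      rcases hprev with h0 | hle
      · have := exStart_ge k; omega
      · have he : exBlockStart k + o - 1 = exBlockStart k + (o - 1) := by omega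
        rw [he] at hle
        have : 0 < exA (exBlockStart k + (o - 1)) :=
          (exA_pos_iff hk (by omega)).2 (by omega)
        linarith
  have h := nth_eq_of_strictMono _ hmono hmem hsurj (i - 1)
  unfold posStartIdx
  rw [h, show i - 1 + 1 = i from by omega]

lemma posEndIdx_exA {i : ℕ} (hi : 1 ≤ i) :
    posEndIdx exA i = exBlockStart i + (exPosLen i - 1) := by
  have hmono : StrictMono (fun j => exBlockStart (j + 1) + (exPosLen (j + 1) - 1)) := by
    apply strictMono_nat_of_lt_succ
    intro j
    have h1 := exStart_succ (j + 1)
    have h2 := exPosLen_lt_len (k := j + 1) (by omega)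
    have h3 := exPosLen_pos (k := j + 2) (by omega)
    have h4 := exPosLen_pos (k := j + 1) (by omega)
    omega
  have hmem : ∀ j, (0 < exA (exBlockStart (j + 1) + (exPosLen (j + 1) - 1)) ∧
      exA (exBlockStart (j + 1) + (exPosLen (j + 1) - 1) + 1) ≤ 0) := by
    intro j
    have hL := exPosLen_pos (k := j + 1) (by omega)
    have hlt := exPosLen_lt_len (k := j + 1) (by omega)
    constructor
    · exact (exA_pos_iff (by omega) (by omega)).2 (by omega)
    · have he : exBlockStart (j + 1) + (exPosLen (j + 1) - 1) + 1
          = exBlockStart (j + 1) + exPosLen (j + 1) := by omega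
      rw [he]
      exact not_pos_exA (by omega) (by omega) le_rfl
  have hsurj : ∀ n, (0 < exA n ∧ exA (n + 1) ≤ 0) →
      ∃ j, exBlockStart (j + 1) + (exPosLen (j + 1) - 1) = n := by
    rintro n ⟨hpos, hnext⟩
    obtain ⟨k, o, hk, ho, rfl⟩ := exists_rep n
    have hoL : o < exPosLen k := (exA_pos_iff hk ho).1 hpos
    have hlt := exPosLen_lt_len hk
    refine ⟨k - 1, ?_⟩
    rw [show k - 1 + 1 = k from by omega]
    by_contra hne
    have hlt2 : o + 1 < exPosLen k := by omega
    have : 0 < exA (exBlockStart k + o + 1) := by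
      have he : exBlockStart k + o + 1 = exBlockStart k + (o + 1) := by omega
      rw [he]
      exact (exA_pos_iff hk (by omega)).2 hlt2
    linarith
  have h := nth_eq_of_strictMono _ hmono hmem hsurj (i - 1)
  unfold posEndIdx
  rw [h, show i - 1 + 1 = i from by omega]

lemma exA_zero_pos : 0 < exA 0 := by
  have := (exA_pos_iff (k := 1) (o := 0) le_rfl
    (by have := two_le_exBlockLen (k := 1) le_rfl; omega)).2 (exPosLen_pos le_rfl)
  rw [exStart_one] at this
  simpa using this

lemma negStartIdx_exA {i : ℕ} (hi : 1 ≤ i) :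
    negStartIdx exA i = exBlockStart i + exPosLen i := by
  have hmono : StrictMono (fun j => exBlockStart (j + 1) + exPosLen (j + 1)) := by
    apply strictMono_nat_of_lt_succ
    intro j
    have h1 := exStart_succ (j + 1)
    have h2 := exPosLen_lt_len (k := j + 1) (by omega)
    omega
  have hmem : ∀ j, (exA (exBlockStart (j + 1) + exPosLen (j + 1)) ≤ 0 ∧
      (exBlockStart (j + 1) + exPosLen (j + 1) = 0 ∨
        0 < exA (exBlockStart (j + 1) + exPosLen (j + 1) - 1))) := by
    intro j
    have hL := exPosLen_pos (k := j + 1) (by omega)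
    have hlt := exPosLen_lt_len (k := j + 1) (by omega)
    constructor
    · exact not_pos_exA (by omega) (by omega) le_rfl
    · right
      have he : exBlockStart (j + 1) + exPosLen (j + 1) - 1
          = exBlockStart (j + 1) + (exPosLen (j + 1) - 1) := by omega
      rw [he]
      exact (exA_pos_iff (by omega) (by omega)).2 (by omega)
  have hsurj : ∀ n, (exA n ≤ 0 ∧ (n = 0 ∨ 0 < exA (n - 1))) →
      ∃ j, exBlockStart (j + 1) + exPosLen (j + 1) = n := by
    rintro n ⟨hneg, hprev⟩
    obtain ⟨k, o, hk, ho, rfl⟩ := exists_rep n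
    have hoL : exPosLen k ≤ o := by
      by_contra hc
      have := (exA_pos_iff hk ho).2 (by omega)
      linarith
    have hL := exPosLen_pos hk
    rcases hprev with h0 | hpos
    · exfalso
      have h1 := exA_zero_pos
      rw [← h0] at h1
      linarith
    · refine ⟨k - 1, ?_⟩
      rw [show k - 1 + 1 = k from by omega]
      by_contra hne
      have hgt : exPosLen k < o := by omega
      have he : exBlockStart k + o - 1 = exBlockStart k + (o - 1) := by omega
      rw [he] at hpos
      have := not_pos_exA hk (o := o - 1) (by omega) (by omega)
      linarith
  have h := nth_eq_of_strictMono _ hmono hmem hsurj (i - 1)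
  unfold negStartIdx
  rw [h, show i - 1 + 1 = i from by omega]

lemma negEndIdx_exA {i : ℕ} (hi : 1 ≤ i) :
    negEndIdx exA i = exBlockStart (i + 1) - 1 := by
  have hmono : StrictMono (fun j => exBlockStart (j + 2) - 1) := by
    apply strictMono_nat_of_lt_succ
    intro j
    show exBlockStart (j + 2) - 1 < exBlockStart (j + 2 + 1) - 1
    have h1 := exStart_add_two (k := j + 2) (by omega)
    have h2 := exStart_ge (j + 1)
    omega
  have hmem : ∀ j, (exA (exBlockStart (j + 2) - 1) ≤ 0 ∧
      0 < exA (exBlockStart (j + 2) - 1 + 1)) := by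
    intro j
    have hs : exBlockStart (j + 2) = exBlockStart (j + 1) + exBlockLen (j + 1) :=
      exStart_succ (j + 1)
    have hlen := two_le_exBlockLen (k := j + 1) (by omega)
    have hlt := exPosLen_lt_len (k := j + 1) (by omega)
    have hL2 := exPosLen_pos (k := j + 2) (by omega)
    have hlen2 := two_le_exBlockLen (k := j + 2) (by omega)
    constructor
    · have he : exBlockStart (j + 2) - 1
          = exBlockStart (j + 1) + (exBlockLen (j + 1) - 1) := by omega
      rw [he]
      exact not_pos_exA (by omega) (by omega) (by omega)
    · have he : exBlockStart (j + 2) - 1 + 1 = exBlockStart (j + 2) + 0 := by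
        have := exStart_ge (j + 1)
        omega
      rw [he]
      exact (exA_pos_iff (by omega) (by omega)).2 (by omega)
  have hsurj : ∀ n, (exA n ≤ 0 ∧ 0 < exA (n + 1)) →
      ∃ j, exBlockStart (j + 2) - 1 = n := by
    rintro n ⟨hneg, hnext⟩
    obtain ⟨k, o, hk, ho, rfl⟩ := exists_rep n
    have hoL : exPosLen k ≤ o := by
      by_contra hc
      have := (exA_pos_iff hk ho).2 (by omega)
      linarith
    refine ⟨k - 1, ?_⟩
    rw [show k - 1 + 2 = k + 1 from by omega, exStart_succ k]
    by_contra hne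
    have hlt2 : o + 1 < exBlockLen k := by omega
    have he : exBlockStart k + o + 1 = exBlockStart k + (o + 1) := by omega
    rw [he] at hnext
    have := not_pos_exA hk hlt2 (by omega)
    linarith
  have h := nth_eq_of_strictMono _ hmono hmem hsurj (i - 1)
  unfold negEndIdx
  rw [h, show i - 1 + 2 = i + 1 from by omega]


lemma not_square_of_between {m j : ℕ} (h1 : m * m < j) (h2 : j < (m + 1) * (m + 1)) :
    ¬ (Nat.sqrt j * Nat.sqrt j = j) := by
  have ha : m ≤ Nat.sqrt j := Nat.le_sqrt.2 (le_of_lt h1)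
  have hb : Nat.sqrt j < m + 1 := Nat.sqrt_lt.2 h2
  have he : Nat.sqrt j = m := by omega
  rw [he]; omega

lemma len_nonsquare {j : ℕ} (h : ¬ (Nat.sqrt j * Nat.sqrt j = j)) : exBlockLen j = 2 := by
  unfold exBlockLen; rw [if_neg h]

lemma posLen_nonsquare {j : ℕ} (h : ¬ (Nat.sqrt j * Nat.sqrt j = j)) : exPosLen j = 1 := by
  unfold exPosLen; rw [if_neg h]

lemma start_run {i : ℕ} {c : ℕ}
    (hns : ∀ j, i ≤ j → j < i + c → ¬ (Nat.sqrt j * Nat.sqrt j = j)) :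
    exBlockStart (i + c) = exBlockStart i + 2 * c := by
  induction c with
  | zero => simp
  | succ t ih =>
    have h1 : exBlockStart (i + t) = exBlockStart i + 2 * t :=
      ih (fun j hj1 hj2 => hns j hj1 (by omega))
    have h2 : exBlockLen (i + t) = 2 := len_nonsquare (hns (i + t) (by omega) (by omega))
    have h3 := exStart_succ (i + t)
    rw [show i + (t + 1) = i + t + 1 from by omega]
    omega

/-- The example series violates both `ST_P` and `ST_N`: for every
`k`, `ε > 0` and `i₀` there is `i > i₀` with `S_{[P_i,P_{i+k}]} < ε`, and there
is `i > i₀` with `S_{[N_i,N_{i+k}]} > −ε`. -/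
theorem statement14 :
    ∀ k : ℕ, ∀ ε : ℝ, 0 < ε → ∀ i₀ : ℕ,
      (∃ i > i₀, SP exA i (i + k) < ε) ∧ (∃ i > i₀, SN exA i (i + k) > -ε) := by
  intro k ε hε i₀
  obtain ⟨M, hM⟩ := exists_nat_gt ((2 * (k : ℝ) + 1) / ε)
  set m := max (max (k + 1) (i₀ + 1)) M with hm
  have hmk : k + 1 ≤ m := le_trans (le_max_left _ _) (le_max_left _ _)
  have hmi : i₀ + 1 ≤ m := le_trans (le_max_right _ _) (le_max_left _ _)
  have hmM : M ≤ m := le_max_right _ _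
  set i := m * m + 1 with hidef
  have him : m ≤ i := by nlinarith
  have hi1 : 1 ≤ i := by omega
  have hii0 : i₀ < i := by omega
  have hns : ∀ j, i ≤ j → j ≤ i + k + 1 → ¬ (Nat.sqrt j * Nat.sqrt j = j) := by
    intro j h1 h2
    have hexp : (m + 1) * (m + 1) = m * m + 2 * m + 1 := by ring
    exact not_square_of_between (m := m) (by omega) (by omega)
  have hrun : ∀ t, t ≤ k + 1 → exBlockStart (i + t) = exBlockStart i + 2 * t := by
    intro t ht
    exact start_run (fun j hj1 hj2 => hns j hj1 (by omega))
  -- cast facts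
  have hIpos : (0 : ℝ) < (i : ℝ) := by exact_mod_cast hi1
  have hkey : (2 * (k : ℝ) + 1) * (1 / (i : ℝ)) < ε := by
    have h1 : (2 * (k : ℝ) + 1) < (M : ℝ) * ε := (div_lt_iff₀ hε).1 hM
    have h2 : (M : ℝ) ≤ (i : ℝ) := by exact_mod_cast le_trans hmM him
    rw [mul_one_div, div_lt_iff₀ hIpos]
    nlinarith
  -- index bound for terms
  have hidx_ge : ∀ n, exBlockStart i ≤ n → (1 : ℝ) / (exBlockIdx n : ℝ) ≤ 1 / (i : ℝ) := by
    intro n hn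
    have h1 : i ≤ exBlockIdx n := le_blockIdx hi1 hn
    apply one_div_le_one_div_of_le hIpos
    exact_mod_cast h1
  constructor
  · -- positive part
    refine ⟨i, hii0, ?_⟩
    have hPs : posStartIdx exA i = exBlockStart i := posStartIdx_exA hi1
    have hPe : posEndIdx exA (i + k) = exBlockStart i + 2 * k := by
      rw [posEndIdx_exA (by omega), posLen_nonsquare (hns (i + k) (by omega) (by omega)),
        hrun k (by omega)]
      omega
    have hbound : ∀ n ∈ Finset.Icc (exBlockStart i) (exBlockStart i + 2 * k),
        (if 0 < exA n then exA n else 0) ≤ 1 / (i : ℝ) := by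
      intro n hn
      rw [Finset.mem_Icc] at hn
      split
      · next h => rw [exA_pos_eq h]; exact hidx_ge n hn.1
      · exact le_of_lt (by positivity)
    have hsum := Finset.sum_le_card_nsmul _ _ _ hbound
    rw [Nat.card_Icc, show exBlockStart i + 2 * k + 1 - exBlockStart i = 2 * k + 1 from by omega,
      nsmul_eq_mul] at hsum
    unfold SP
    rw [if_neg (by omega), hPs, hPe]
    calc (∑ n ∈ Finset.Icc (exBlockStart i) (exBlockStart i + 2 * k),
          if 0 < exA n then exA n else 0)
        ≤ ((2 * k + 1 : ℕ) : ℝ) * (1 / (i : ℝ)) := hsum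
      _ = (2 * (k : ℝ) + 1) * (1 / (i : ℝ)) := by push_cast; ring
      _ < ε := hkey
  · -- negative part
    refine ⟨i, hii0, ?_⟩
    have hNs : negStartIdx exA i = exBlockStart i + 1 := by
      rw [negStartIdx_exA hi1, posLen_nonsquare (hns i le_rfl (by omega))]
    have hNe : negEndIdx exA (i + k) = exBlockStart i + 2 * k + 1 := by
      rw [negEndIdx_exA (by omega), show i + k + 1 = i + (k + 1) from by omega,
        hrun (k + 1) le_rfl]
      omega
    have hbound : ∀ n ∈ Finset.Icc (exBlockStart i + 1) (exBlockStart i + 2 * k + 1),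
        -(1 / (i : ℝ)) ≤ (if exA n ≤ 0 then exA n else 0) := by
      intro n hn
      rw [Finset.mem_Icc] at hn
      split
      · next h =>
        rw [exA_neg_eq h]
        have := hidx_ge n (by omega)
        linarith
      · have : (0:ℝ) < 1 / (i : ℝ) := by positivity
        linarith
    have hsum := Finset.card_nsmul_le_sum _ _ _ hbound
    rw [Nat.card_Icc,
      show exBlockStart i + 2 * k + 1 + 1 - (exBlockStart i + 1) = 2 * k + 1 from by omega,
      nsmul_eq_mul] at hsum
    unfold SN
    rw [if_neg (by omega), hNs, hNe, gt_iff_lt]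
    calc -ε < -((2 * (k : ℝ) + 1) * (1 / (i : ℝ))) := by linarith
      _ = ((2 * k + 1 : ℕ) : ℝ) * (-(1 / (i : ℝ))) := by push_cast; ring
      _ ≤ _ := hsum
end
end

section
/- For the example series ∑_{n=0}^∞ a_n, the set Z_R = { r ∈ ℝ : ∑_{n=0}^∞ a_{σ(n)} = r for some type R λ-permutation σ } equals {0}: there is a type R λ-permutation rearranging the series to 0, and every type R λ-permutation of the series rearranges it to 0. -/
open Filter Finset

noncomputable section
open scoped Classical

/-!
The positive terms of `exA`, in order, are `1 / exBlockOf m` for `m = 0, 1, …`, and the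
nonpositive terms are their negatives. A type R permutation uses the terms of each sign in
their original order, so after `n` steps it has used the first `p` positive and the first `q`
nonpositive terms, and its partial sum is `exPosSum p - exPosSum q`.

Alternating the two signs gives a type R permutation with block number `2` whose partial sums
are `0` or `1 / exBlockOf m`, so it rearranges the series to `0`.

Conversely, every block lying strictly between the first unused term of one sign and the last
used term of the other contributes a separate interval to the set of used positions. With block
number `C` the terms of the two signs used so far therefore stay within `C` blocks of each
other. The blocks `t² + 1, …, t² + 2t` are single pairs `±1 / k`, so at the moment when
`min p q` first reaches the number of positive terms in the blocks up to `t²`, the partial sum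
is at most `(C + 1) / (t² + 1)` in absolute value once `t > C`. Hence the sum can only be `0`.
-/

theorem Nat.nth_eq_of_strictMono_of_range_eq {p : ℕ → Prop} {f : ℕ → ℕ} (hf : StrictMono f)
    (hp : Set.range f = Set.ofPred p) : Nat.nth p = f := by
  have hinf : (Set.ofPred p).Infinite := hp ▸ Set.infinite_range_of_injective hf.injective
  have huniv : {n : ℕ | ∀ hfin : (Set.ofPred p).Finite, n < hfin.toFinset.card} = Set.univ :=
    Set.eq_univ_of_forall fun _ hfin => absurd hfin hinf
  funext n
  refine (Nat.eq_nth_of_strictMonoOn_of_mapsTo_of_surjOn f ?_ ?_ ?_ (huniv ▸ Set.mem_univ n)).symm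
    <;> rw [huniv]
  · rw [← hp, ← Set.image_univ]; exact Set.surjOn_image f _
  · exact fun x _ => hp ▸ Set.mem_range_self x
  · exact hf.strictMonoOn _

theorem Nat.nth_comp_perm_of_strictMonoOn {σ : Equiv.Perm ℕ} {p : ℕ → Prop}
    (hp : (Set.ofPred p).Infinite) (hσ : StrictMonoOn σ {i | p (σ i)}) (m : ℕ) :
    σ (Nat.nth (fun i => p (σ i)) m) = Nat.nth p m := by
  have hinf : (Set.ofPred fun i => p (σ i)).Infinite := hp.preimage fun x _ => σ.surjective x
  refine congrFun (Nat.nth_eq_of_strictMono_of_range_eq (f := σ ∘ Nat.nth _) ?_ ?_).symm m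
  · exact fun a b hab => hσ (Nat.nth_mem_of_infinite hinf a) (Nat.nth_mem_of_infinite hinf b)
      (Nat.nth_strictMono hinf hab)
  · rw [Set.range_comp, Nat.range_nth_of_infinite hinf]
    exact σ.image_preimage (Set.ofPred p)

theorem Nat.filter_range_eq_image_nth (p : ℕ → Prop) (n : ℕ) :
    (range n).filter p = (range (Nat.count p n)).image (Nat.nth p) := by
  ext i
  simp only [mem_filter, mem_range, mem_image]
  constructor
  · rintro ⟨hin, hpi⟩
    exact ⟨Nat.count p i, Nat.count_strict_mono hpi hin, Nat.nth_count hpi⟩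
  · rintro ⟨m, hm, rfl⟩
    exact ⟨Nat.nth_lt_of_lt_count hm, Nat.nth_mem m fun hf => hm.trans_le (Nat.count_le_card hf n)⟩

theorem Equiv.Perm.image_range_eq_image_nth_union {σ : Equiv.Perm ℕ} {p q : ℕ → Prop}
    (hpq : ∀ n, q n ↔ ¬ p n) (hp : (Set.ofPred p).Infinite) (hq : (Set.ofPred q).Infinite)
    (hσp : StrictMonoOn σ {i | p (σ i)}) (hσq : StrictMonoOn σ {i | q (σ i)}) (n : ℕ) :
    (range n).image σ = (range (Nat.count (fun i => p (σ i)) n)).image (Nat.nth p) ∪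
      (range (Nat.count (fun i => q (σ i)) n)).image (Nat.nth q) := by
  have hsplit :
      range n = (range n).filter (fun i => p (σ i)) ∪ (range n).filter (fun i => q (σ i)) := by
    simp only [hpq]; exact (filter_union_filter_not_eq _ _).symm
  rw [hsplit, image_union, Nat.filter_range_eq_image_nth, Nat.filter_range_eq_image_nth,
    image_image, image_image]
  congr 1 <;> refine image_congr fun m _ => ?_
  exacts [Nat.nth_comp_perm_of_strictMonoOn hp hσp m, Nat.nth_comp_perm_of_strictMonoOn hq hσq m]

theorem Function.Injective.strictMonoOn_of_lt_imp_lt {α β : Type*} [LinearOrder α]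
    [LinearOrder β] {f : α → β} (hf : Function.Injective f) {s : Set α}
    (h : ∀ i ∈ s, ∀ j ∈ s, f i < f j → i < j) : StrictMonoOn f s := by
  intro i hi j hj hij
  rcases lt_trichotomy (f i) (f j) with hlt | heq | hgt
  · exact hlt
  · exact absurd (hf heq) hij.ne
  · exact absurd (h j hj i hi hgt) hij.not_gt

section TypeR

variable {a : ℕ → ℝ} {σ : Equiv.Perm ℕ}

theorem IsTypeR.strictMonoOn_pos (h : IsTypeR a σ) : StrictMonoOn σ {i | 0 < a (σ i)} :=
  σ.injective.strictMonoOn_of_lt_imp_lt fun i hi j hj hij => h i j hij (.inl ⟨hi, hj⟩)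

theorem IsTypeR.strictMonoOn_nonpos (h : IsTypeR a σ) : StrictMonoOn σ {i | a (σ i) ≤ 0} :=
  σ.injective.strictMonoOn_of_lt_imp_lt fun i hi j hj hij => h i j hij (.inr ⟨hi, hj⟩)

theorem IsTypeR.image_range (h : IsTypeR a σ) (hpos : {n | 0 < a n}.Infinite)
    (hnonpos : {n | a n ≤ 0}.Infinite) (n : ℕ) :
    (range n).image σ = (range (Nat.count (fun i => 0 < a (σ i)) n)).image (Nat.nth (0 < a ·)) ∪
      (range (Nat.count (fun i => a (σ i) ≤ 0) n)).image (Nat.nth (a · ≤ 0)) :=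
  σ.image_range_eq_image_nth_union (fun _ => not_lt.symm) hpos hnonpos h.strictMonoOn_pos
    h.strictMonoOn_nonpos n

end TypeR

theorem partialSum_comp_perm (a : ℕ → ℝ) (σ : Equiv.Perm ℕ) (n : ℕ) :
    partialSum (fun i => a (σ i)) n = ∑ x ∈ (range n).image σ, a x :=
  (sum_image fun _ _ _ _ h => σ.injective h).symm

theorem exists_min_count_eq {p q : ℕ → Prop} (hp : (Set.ofPred p).Infinite)
    (hq : (Set.ofPred q).Infinite) (m : ℕ) :
    ∃ n, m < n ∧ min (Nat.count p n) (Nat.count q n) = m + 1 := by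
  have hpm := Nat.count_nth_succ_of_infinite hp m
  have hqm := Nat.count_nth_succ_of_infinite hq m
  have hmp : m ≤ Nat.nth p m := (Nat.nth_strictMono hp).id_le m
  rcases le_total (Nat.nth p m) (Nat.nth q m) with h | h
  · have := Nat.count_monotone p (Nat.add_le_add_right h 1)
    exact ⟨Nat.nth q m + 1, by omega, by omega⟩
  · have := Nat.count_monotone q (Nat.add_le_add_right h 1)
    exact ⟨Nat.nth p m + 1, by omega, by omega⟩

def exHalfLen (k : ℕ) : ℕ := if Nat.sqrt k * Nat.sqrt k = k then k else 1

def exHalfCount (K : ℕ) : ℕ := ∑ k ∈ Icc 1 K, exHalfLen k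

theorem exBlockLen_eq (k : ℕ) : exBlockLen k = 2 * exHalfLen k := by
  unfold exBlockLen exHalfLen; split <;> ring

theorem exHalfCount_succ (K : ℕ) : exHalfCount (K + 1) = exHalfCount K + exHalfLen (K + 1) :=
  sum_Icc_succ_top (Nat.le_add_left 1 K) _

theorem exHalfCount_strictMono : StrictMono exHalfCount := by
  refine strictMono_nat_of_lt_succ fun K => ?_
  rw [exHalfCount_succ, lt_add_iff_pos_right, exHalfLen]
  split <;> omega

theorem le_exHalfCount (K : ℕ) : K ≤ exHalfCount K :=
  exHalfCount_strictMono.id_le K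

theorem exBlockStart_eq (k : ℕ) : exBlockStart k = 2 * exHalfCount (k - 1) := by
  rw [exBlockStart, exHalfCount, mul_sum]
  exact sum_congr (by ext; simp; omega) fun j _ => exBlockLen_eq j

theorem exists_lt_exHalfCount (m : ℕ) : ∃ K, m < exHalfCount K :=
  ⟨m + 1, m.lt_succ_self.trans_le (le_exHalfCount _)⟩

/-- The block containing the `m`-th positive term, and also the `m`-th nonpositive term
(counting from `0`). -/
def exBlockOf (m : ℕ) : ℕ := Nat.find (exists_lt_exHalfCount m)

theorem exBlockOf_le_iff {m K : ℕ} : exBlockOf m ≤ K ↔ m < exHalfCount K := by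
  rw [exBlockOf, Nat.find_le_iff]
  exact ⟨fun ⟨j, hj, hm⟩ => hm.trans_le (exHalfCount_strictMono.monotone hj),
    fun h => ⟨K, le_rfl, h⟩⟩

theorem lt_exBlockOf_iff {m K : ℕ} : K < exBlockOf m ↔ exHalfCount K ≤ m := by
  simpa only [not_le, not_lt] using exBlockOf_le_iff.not

theorem exBlockOf_spec (m : ℕ) :
    0 < exBlockOf m ∧ exHalfCount (exBlockOf m - 1) ≤ m ∧ m < exHalfCount (exBlockOf m) := by
  have h0 : 0 < exBlockOf m := lt_exBlockOf_iff.2 (Nat.zero_le m)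
  exact ⟨h0, lt_exBlockOf_iff.1 (by omega), exBlockOf_le_iff.1 le_rfl⟩

theorem exBlockOf_eq_iff {m k : ℕ} (hk : 0 < k) :
    exBlockOf m = k ↔ exHalfCount (k - 1) ≤ m ∧ m < exHalfCount k := by
  rw [← lt_exBlockOf_iff, ← exBlockOf_le_iff]; omega

theorem exBlockOf_mono : Monotone exBlockOf := fun _ b hab =>
  exBlockOf_le_iff.2 (hab.trans_lt (exBlockOf_spec b).2.2)

theorem exBlockOf_exHalfCount (K : ℕ) : exBlockOf (exHalfCount K) = K + 1 :=
  (exBlockOf_eq_iff K.succ_pos).2 ⟨le_rfl, exHalfCount_strictMono K.lt_succ_self⟩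

/- Block `k` occupies the positions `2 * exHalfCount (k - 1) ≤ n < 2 * exHalfCount k`. -/
theorem exBlockIdx_eq (n : ℕ) : exBlockIdx n = exBlockOf (n / 2) := by
  obtain ⟨h0, hlo, hhi⟩ := exBlockOf_spec (n / 2)
  have hk := le_exHalfCount (exBlockOf (n / 2) - 1)
  rw [exBlockIdx, Nat.findGreatest_eq_iff]
  refine ⟨by omega, fun _ => by rw [exBlockStart_eq]; omega, fun j hj _ hle => ?_⟩
  have := exHalfCount_strictMono.monotone (show exBlockOf (n / 2) ≤ j - 1 by omega)
  rw [exBlockStart_eq] at hle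
  omega

theorem exHalfCount_eq_sub_one_add {k : ℕ} (hk : 0 < k) :
    exHalfCount k = exHalfCount (k - 1) + exHalfLen k := by
  conv_lhs => rw [← Nat.sub_add_cancel hk]
  rw [exHalfCount_succ, Nat.sub_add_cancel hk]

theorem exA_eq (n : ℕ) :
    exA n = if n < exHalfCount (exBlockOf (n / 2) - 1) + exHalfCount (exBlockOf (n / 2))
      then 1 / (exBlockOf (n / 2) : ℝ) else -(1 / (exBlockOf (n / 2) : ℝ)) := by
  obtain ⟨h0, hlo, -⟩ := exBlockOf_spec (n / 2)
  have hC := exHalfCount_eq_sub_one_add h0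
  have hlen : exHalfLen (exBlockOf (n / 2)) =
      if Nat.sqrt (exBlockOf (n / 2)) * Nat.sqrt (exBlockOf (n / 2)) = exBlockOf (n / 2)
      then exBlockOf (n / 2) else 1 := rfl
  simp only [exA, exBlockIdx_eq, exBlockStart_eq]
  split_ifs at hlen ⊢ <;> first | rfl | (exfalso; omega)

/- The `m`-th positive term is preceded by `m` positive terms and by the nonpositive terms of
the blocks before its own; the `m`-th nonpositive term by `m` nonpositive terms and by the
positive terms of its own block and the earlier ones. -/
def exPosIdx (m : ℕ) : ℕ := m + exHalfCount (exBlockOf m - 1)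

def exNegIdx (m : ℕ) : ℕ := m + exHalfCount (exBlockOf m)

theorem exA_exPosIdx (m : ℕ) : exA (exPosIdx m) = 1 / (exBlockOf m : ℝ) := by
  obtain ⟨h0, hlo, hhi⟩ := exBlockOf_spec m
  have hblk : exBlockOf (exPosIdx m / 2) = exBlockOf m := by
    rw [exBlockOf_eq_iff h0, exPosIdx]; omega
  rw [exA_eq, hblk, if_pos (by rw [exPosIdx]; omega)]

theorem exA_exNegIdx (m : ℕ) : exA (exNegIdx m) = -(1 / (exBlockOf m : ℝ)) := by
  obtain ⟨h0, hlo, hhi⟩ := exBlockOf_spec m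
  have hblk : exBlockOf (exNegIdx m / 2) = exBlockOf m := by
    rw [exBlockOf_eq_iff h0, exNegIdx]; omega
  rw [exA_eq, hblk, if_neg (by rw [exNegIdx]; omega)]

theorem exA_exPosIdx_pos (m : ℕ) : 0 < exA (exPosIdx m) := by
  rw [exA_exPosIdx]; exact one_div_pos.2 (Nat.cast_pos.2 (exBlockOf_spec m).1)

theorem exA_exNegIdx_nonpos (m : ℕ) : exA (exNegIdx m) ≤ 0 := by
  rw [exA_exNegIdx, neg_nonpos]; exact one_div_nonneg.2 (Nat.cast_nonneg _)

theorem exPosIdx_strictMono : StrictMono exPosIdx := by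
  refine strictMono_nat_of_lt_succ fun m => ?_
  have := exHalfCount_strictMono.monotone
    (Nat.sub_le_sub_right (exBlockOf_mono (Nat.le_add_right m 1)) 1)
  unfold exPosIdx; omega

theorem exNegIdx_strictMono : StrictMono exNegIdx := by
  refine strictMono_nat_of_lt_succ fun m => ?_
  have := exHalfCount_strictMono.monotone (exBlockOf_mono (Nat.le_add_right m 1))
  unfold exNegIdx; omega

theorem exPosIdx_or_exNegIdx (n : ℕ) : (∃ m, exPosIdx m = n) ∨ ∃ m, exNegIdx m = n := by
  obtain ⟨h0, hlo, hhi⟩ := exBlockOf_spec (n / 2)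
  set k := exBlockOf (n / 2)
  have hC := exHalfCount_strictMono (Nat.sub_one_lt_of_lt h0)
  by_cases hn : n < exHalfCount (k - 1) + exHalfCount k
  · have hblk : exBlockOf (n - exHalfCount (k - 1)) = k := (exBlockOf_eq_iff h0).2 (by omega)
    exact .inl ⟨n - exHalfCount (k - 1), by rw [exPosIdx, hblk]; omega⟩
  · have hblk : exBlockOf (n - exHalfCount k) = k := (exBlockOf_eq_iff h0).2 (by omega)
    exact .inr ⟨n - exHalfCount k, by rw [exNegIdx, hblk]; omega⟩

theorem range_exPosIdx : Set.range exPosIdx = {n | 0 < exA n} := by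
  ext n
  refine ⟨fun ⟨m, hm⟩ => hm ▸ exA_exPosIdx_pos m, fun hn => ?_⟩
  rcases exPosIdx_or_exNegIdx n with hpos | ⟨m, rfl⟩
  · exact hpos
  · exact absurd hn (exA_exNegIdx_nonpos m).not_gt

theorem range_exNegIdx : Set.range exNegIdx = {n | exA n ≤ 0} := by
  ext n
  refine ⟨fun ⟨m, hm⟩ => hm ▸ exA_exNegIdx_nonpos m, fun hn => ?_⟩
  rcases exPosIdx_or_exNegIdx n with ⟨m, rfl⟩ | hneg
  · exact absurd hn (exA_exPosIdx_pos m).not_ge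
  · exact hneg

theorem nth_exA_pos : Nat.nth (0 < exA ·) = exPosIdx :=
  Nat.nth_eq_of_strictMono_of_range_eq exPosIdx_strictMono range_exPosIdx

theorem nth_exA_nonpos : Nat.nth (exA · ≤ 0) = exNegIdx :=
  Nat.nth_eq_of_strictMono_of_range_eq exNegIdx_strictMono range_exNegIdx

theorem exPosIdx_add_one (m : ℕ) :
    exPosIdx m + 1 = if m + 1 < exHalfCount (exBlockOf m) then exPosIdx (m + 1)
      else exNegIdx (exHalfCount (exBlockOf m - 1)) := by
  obtain ⟨h0, hlo, hhi⟩ := exBlockOf_spec m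
  split_ifs with h
  · have hblk : exBlockOf (m + 1) = exBlockOf m := (exBlockOf_eq_iff h0).2 ⟨by omega, h⟩
    rw [exPosIdx, exPosIdx, hblk]; omega
  · have hblk : exBlockOf (exHalfCount (exBlockOf m - 1)) = exBlockOf m := by
      rw [exBlockOf_exHalfCount]; omega
    rw [exPosIdx, exNegIdx, hblk]; omega

theorem exNegIdx_add_one (m : ℕ) :
    exNegIdx m + 1 = if m + 1 < exHalfCount (exBlockOf m) then exNegIdx (m + 1)
      else exPosIdx (m + 1) := by
  obtain ⟨h0, hlo, hhi⟩ := exBlockOf_spec m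
  split_ifs with h
  · have hblk : exBlockOf (m + 1) = exBlockOf m := (exBlockOf_eq_iff h0).2 ⟨by omega, h⟩
    rw [exNegIdx, exNegIdx, hblk]; omega
  · have hm : m + 1 = exHalfCount (exBlockOf m) := by omega
    rw [exPosIdx, exNegIdx, hm, exBlockOf_exHalfCount, Nat.add_sub_cancel]; omega

theorem infinite_setOf_exA_pos : {n | 0 < exA n}.Infinite :=
  range_exPosIdx ▸ Set.infinite_range_of_injective exPosIdx_strictMono.injective

theorem infinite_setOf_exA_nonpos : {n | exA n ≤ 0}.Infinite :=
  range_exNegIdx ▸ Set.infinite_range_of_injective exNegIdx_strictMono.injective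

theorem exBlockOf_exHalfCount_sub_one {k : ℕ} (hk : 0 < k) :
    exBlockOf (exHalfCount k - 1) = k := by
  have := exHalfCount_strictMono (Nat.sub_one_lt_of_lt hk)
  exact (exBlockOf_eq_iff hk).2 (by omega)

theorem exPosIdx_last_add_one {k : ℕ} (hk : 0 < k) :
    exPosIdx (exHalfCount k - 1) + 1 = exNegIdx (exHalfCount (k - 1)) := by
  rw [exPosIdx_add_one, exBlockOf_exHalfCount_sub_one hk, if_neg (by omega)]

theorem exNegIdx_last_add_one {k : ℕ} (hk : 0 < k) :
    exNegIdx (exHalfCount k - 1) + 1 = exPosIdx (exHalfCount k) := by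
  have := le_exHalfCount k
  rw [exNegIdx_add_one, exBlockOf_exHalfCount_sub_one hk, if_neg (by omega),
    Nat.sub_add_cancel (by omega)]

theorem exPosIdx_ne_exNegIdx (i j : ℕ) : exPosIdx i ≠ exNegIdx j := fun h =>
  (exA_exPosIdx_pos i).not_ge (h ▸ exA_exNegIdx_nonpos j)

def exFirst (p q : ℕ) : Finset ℕ := (range p).image exPosIdx ∪ (range q).image exNegIdx

theorem exPosIdx_mem_exFirst {m p q : ℕ} : exPosIdx m ∈ exFirst p q ↔ m < p := by
  simp [exFirst, exPosIdx_strictMono.injective.eq_iff, fun i => (exPosIdx_ne_exNegIdx m i).symm]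

theorem exNegIdx_mem_exFirst {m p q : ℕ} : exNegIdx m ∈ exFirst p q ↔ m < q := by
  simp [exFirst, exNegIdx_strictMono.injective.eq_iff, fun i => exPosIdx_ne_exNegIdx i m]

def exPosSum (m : ℕ) : ℝ := ∑ j ∈ range m, 1 / (exBlockOf j : ℝ)

theorem sum_exFirst (p q : ℕ) : ∑ x ∈ exFirst p q, exA x = exPosSum p - exPosSum q := by
  have hdisj : Disjoint ((range p).image exPosIdx) ((range q).image exNegIdx) := by
    simp only [disjoint_left, mem_image, not_exists, not_and]
    rintro _ ⟨i, -, rfl⟩ j - h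
    exact exPosIdx_ne_exNegIdx i j h.symm
  rw [exFirst, sum_union hdisj, sum_image exPosIdx_strictMono.injective.injOn,
    sum_image exNegIdx_strictMono.injective.injOn]
  simp only [exA_exPosIdx, exA_exNegIdx, sum_neg_distrib, exPosSum, sub_eq_add_neg]

theorem blockCount_exFirst_le_two {p q : ℕ} (hqp : q ≤ p) (hpq : p ≤ q + 1) :
    blockCount (exFirst p q) ≤ 2 := by
  refine (card_le_card (t := {exPosIdx (p - 1), exNegIdx (q - 1)}) fun x hx => ?_).trans
    card_le_two
  rw [mem_filter] at hx
  obtain ⟨hx, hend⟩ := hx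
  rw [mem_insert, mem_singleton]
  rcases mem_union.1 hx with hx | hx <;> obtain ⟨m, hm, rfl⟩ := mem_image.1 hx <;>
    rw [mem_range] at hm
  · have := (exBlockOf_spec m).2.1
    rw [exPosIdx_add_one] at hend
    split_ifs at hend
    · rw [exPosIdx_mem_exFirst] at hend; left; congr; omega
    · rw [exNegIdx_mem_exFirst] at hend; left; congr; omega
  · rw [exNegIdx_add_one] at hend
    split_ifs at hend
    · rw [exNegIdx_mem_exFirst] at hend; right; congr; omega
    · rw [exPosIdx_mem_exFirst] at hend; right; congr; omega

theorem IsTypeR.image_range_eq_exFirst {σ : Equiv.Perm ℕ} (h : IsTypeR exA σ) (n : ℕ) :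
    (range n).image σ = exFirst (Nat.count (fun i => 0 < exA (σ i)) n)
      (Nat.count (fun i => exA (σ i) ≤ 0) n) := by
  rw [h.image_range infinite_setOf_exA_pos infinite_setOf_exA_nonpos, nth_exA_pos, nth_exA_nonpos,
    exFirst]

theorem card_add_one_le_blockCount {s t : Finset ℕ} (hne : s.Nonempty)
    (ht : ∀ x ∈ t, x ∈ s ∧ x + 1 ∉ s ∧ x < s.max' hne) : #t + 1 ≤ blockCount s := by
  have hmax : s.max' hne ∈ s.filter (fun x => x + 1 ∉ s) :=
    mem_filter.2 ⟨s.max'_mem hne, fun h => (s.le_max' _ h).not_gt (Nat.lt_succ_self _)⟩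
  have := card_le_card (insert_subset hmax fun x hx => mem_filter.2 ⟨(ht x hx).1, (ht x hx).2.1⟩)
  rwa [card_insert_of_notMem fun h => (ht _ h).2.2.ne rfl] at this

/- For every block strictly between the block of the first unused `e'`-term and that of the last
used `e`-term, the last `e`-term of that block is used and followed by an unused `e'`-term, so it
ends an interval of the used positions; so does the largest used position. -/
theorem exBlockOf_le_add_blockCount {e e' : ℕ → ℕ} (he : StrictMono e)
    (he' : Function.Injective e') (hdisj : ∀ i j, e i ≠ e' j)
    (hlast : ∀ k, 0 < k → ∃ i, exHalfCount (k - 1) ≤ i ∧ e (exHalfCount k - 1) + 1 = e' i)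
    {p q : ℕ} (hqp : q < p) :
    exBlockOf (p - 1) ≤ exBlockOf q + blockCount ((range p).image e ∪ (range q).image e') := by
  set s := (range p).image e ∪ (range q).image e'
  have he_mem {j : ℕ} (hj : j < p) : e j ∈ s :=
    mem_union_left _ (mem_image_of_mem e (mem_range.2 hj))
  have hne : s.Nonempty := ⟨e 0, he_mem (by omega)⟩
  have he'_not_mem {i : ℕ} (hi : q ≤ i) : e' i ∉ s := by
    simp only [s, mem_union, mem_image, mem_range, not_or, not_exists, not_and]
    exact ⟨fun j _ h => hdisj j i h, fun j hj h => by rw [he' h] at hj; omega⟩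
  set f : ℕ → ℕ := fun k => e (exHalfCount k - 1)
  have hf {k : ℕ} (hk : k ∈ Ioo (exBlockOf q) (exBlockOf (p - 1))) :
      f k ∈ s ∧ f k + 1 ∉ s ∧ f k < s.max' hne := by
    rw [mem_Ioo] at hk
    obtain ⟨i, hi, hsucc⟩ := hlast k (by omega)
    have hq := (exBlockOf_spec q).2.2
    have hqk := exHalfCount_strictMono.monotone (show exBlockOf q ≤ k - 1 by omega)
    have hkp := exHalfCount_strictMono.monotone (show k ≤ exBlockOf (p - 1) - 1 by omega)
    have hp := (exBlockOf_spec (p - 1)).2.1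
    have hk1 := le_exHalfCount k
    refine ⟨he_mem (by omega), hsucc ▸ he'_not_mem (by omega), ?_⟩
    exact (he (show exHalfCount k - 1 < p - 1 by omega)).trans_le (s.le_max' _ (he_mem (by omega)))
  have hinj : Set.InjOn f (Ioo (exBlockOf q) (exBlockOf (p - 1))) := by
    intro a ha b hb hab
    have h1 := le_exHalfCount a
    have h2 := le_exHalfCount b
    simp only [coe_Ioo, Set.mem_Ioo] at ha hb
    exact exHalfCount_strictMono.injective (by have := he.injective hab; omega)
  have hcard := card_add_one_le_blockCount hne (t := (Ioo _ _).image f) fun x hx => by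
    obtain ⟨k, hk, rfl⟩ := mem_image.1 hx
    exact hf hk
  rw [card_image_of_injOn hinj, Nat.card_Ioo] at hcard
  omega

theorem exBlockOf_le_add_blockCount_exFirst_of_lt {p q : ℕ} (hqp : q < p) :
    exBlockOf (p - 1) ≤ exBlockOf q + blockCount (exFirst p q) :=
  exBlockOf_le_add_blockCount exPosIdx_strictMono exNegIdx_strictMono.injective
    exPosIdx_ne_exNegIdx (fun _ hk => ⟨_, le_rfl, exPosIdx_last_add_one hk⟩) hqp

theorem exBlockOf_le_add_blockCount_exFirst_of_gt {p q : ℕ} (hpq : p < q) :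
    exBlockOf (q - 1) ≤ exBlockOf p + blockCount (exFirst p q) := by
  rw [exFirst, union_comm]
  exact exBlockOf_le_add_blockCount exNegIdx_strictMono exPosIdx_strictMono.injective
    (fun i j h => exPosIdx_ne_exNegIdx j i h.symm)
    (fun k hk => ⟨_, exHalfCount_strictMono.monotone (Nat.sub_le k 1), exNegIdx_last_add_one hk⟩)
    hpq

def exRiffle (n : ℕ) : ℕ := if n % 2 = 0 then exPosIdx (n / 2) else exNegIdx (n / 2)

theorem exA_exRiffle_pos_iff (n : ℕ) : 0 < exA (exRiffle n) ↔ n % 2 = 0 := by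
  unfold exRiffle
  split_ifs with h
  · exact iff_of_true (exA_exPosIdx_pos _) h
  · exact iff_of_false (exA_exNegIdx_nonpos _).not_gt h

theorem exRiffle_bijective : Function.Bijective exRiffle := by
  refine ⟨fun i j hij => ?_, fun n => ?_⟩
  · unfold exRiffle at hij
    split_ifs at hij with hi hj hj
    · have := exPosIdx_strictMono.injective hij; omega
    · exact absurd hij (exPosIdx_ne_exNegIdx _ _)
    · exact absurd hij.symm (exPosIdx_ne_exNegIdx _ _)
    · have := exNegIdx_strictMono.injective hij; omega
  · rcases exPosIdx_or_exNegIdx n with ⟨m, rfl⟩ | ⟨m, rfl⟩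
    · exact ⟨2 * m, by simp [exRiffle]⟩
    · exact ⟨2 * m + 1, by simp [exRiffle, Nat.add_mod, Nat.add_div]⟩

def exRifflePerm : Equiv.Perm ℕ := Equiv.ofBijective exRiffle exRiffle_bijective

theorem image_range_exRifflePerm (n : ℕ) :
    (range n).image exRifflePerm = exFirst ((n + 1) / 2) (n / 2) := by
  ext x
  simp only [exRifflePerm, Equiv.ofBijective_apply, exFirst, mem_image, mem_range, mem_union]
  constructor
  · rintro ⟨i, hi, rfl⟩
    unfold exRiffle
    split_ifs with h
    · exact .inl ⟨i / 2, by omega, rfl⟩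
    · exact .inr ⟨i / 2, by omega, rfl⟩
  · rintro (⟨m, hm, rfl⟩ | ⟨m, hm, rfl⟩)
    · exact ⟨2 * m, by omega, by simp [exRiffle]⟩
    · exact ⟨2 * m + 1, by omega, by simp [exRiffle, Nat.add_mod, Nat.add_div]⟩

theorem isTypeR_exRifflePerm : IsTypeR exA exRifflePerm := by
  intro i j hlt hsign
  simp only [exRifflePerm, Equiv.ofBijective_apply] at hlt hsign
  rcases hsign with ⟨hi, hj⟩ | ⟨hi, hj⟩
  · rw [exA_exRiffle_pos_iff] at hi hj
    rw [exRiffle, exRiffle, if_pos hi, if_pos hj, exPosIdx_strictMono.lt_iff_lt] at hlt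
    omega
  · rw [← not_lt, exA_exRiffle_pos_iff] at hi hj
    rw [exRiffle, exRiffle, if_neg hi, if_neg hj, exNegIdx_strictMono.lt_iff_lt] at hlt
    omega

theorem hasBBN_exRifflePerm : HasBBN exRifflePerm 2 := fun n => by
  rw [image_range_exRifflePerm]
  exact blockCount_exFirst_le_two (by omega) (by omega)

theorem tendsto_exBlockOf_atTop : Tendsto exBlockOf atTop atTop :=
  tendsto_atTop_atTop.2 fun K => ⟨exHalfCount K, fun _ hm => (lt_exBlockOf_iff.2 hm).le⟩

theorem partialSum_exRifflePerm_mem_Icc (n : ℕ) :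
    partialSum (fun i => exA (exRifflePerm i)) n ∈ Set.Icc 0 (1 / (exBlockOf (n / 2) : ℝ)) := by
  rw [partialSum_comp_perm, image_range_exRifflePerm, sum_exFirst]
  rcases Nat.even_or_odd' n with ⟨m, rfl | rfl⟩
  · rw [show (2 * m + 1) / 2 = 2 * m / 2 by omega, sub_self]
    exact ⟨le_rfl, one_div_nonneg.2 (Nat.cast_nonneg _)⟩
  · rw [show (2 * m + 1 + 1) / 2 = (2 * m + 1) / 2 + 1 by omega, exPosSum, exPosSum,
      sum_range_succ, add_sub_cancel_left]
    exact ⟨one_div_nonneg.2 (Nat.cast_nonneg _), le_rfl⟩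

theorem convergesTo_exRifflePerm : ConvergesTo (fun n => exA (exRifflePerm n)) 0 :=
  squeeze_zero (fun n => (partialSum_exRifflePerm_mem_Icc n).1)
    (fun n => (partialSum_exRifflePerm_mem_Icc n).2)
    (tendsto_one_div_atTop_nhds_zero_nat.comp
      (tendsto_natCast_atTop_atTop.comp
        (tendsto_exBlockOf_atTop.comp (Nat.tendsto_div_const_atTop two_ne_zero))))

theorem zero_mem_ZR_exA : (0 : ℝ) ∈ ZR exA :=
  ⟨exRifflePerm, ⟨isTypeR_exRifflePerm, ⟨2, hasBBN_exRifflePerm⟩, ⟨0, convergesTo_exRifflePerm⟩⟩,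
    convergesTo_exRifflePerm⟩

theorem exHalfLen_eq_one {t k : ℕ} (h1 : t * t < k) (h2 : k < (t + 1) * (t + 1)) :
    exHalfLen k = 1 := by
  rw [exHalfLen, if_neg]
  intro hsq
  rw [← hsq, Nat.mul_self_lt_mul_self_iff] at h1 h2
  omega

theorem exHalfCount_mul_self_add {t d : ℕ} (hd : d ≤ 2 * t) :
    exHalfCount (t * t + d) = exHalfCount (t * t) + d := by
  induction d with
  | zero => rfl
  | succ d ih =>
    rw [← add_assoc, exHalfCount_succ, ih (by omega),
      exHalfLen_eq_one (t := t) (by omega) (by nlinarith)]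
    omega

theorem exPosSum_sub_eq {p q : ℕ} (h : q ≤ p) :
    exPosSum p - exPosSum q = ∑ j ∈ Ico q p, 1 / (exBlockOf j : ℝ) :=
  (sum_Ico_eq_sub _ h).symm

theorem exPosSum_mono : Monotone exPosSum := fun _ _ h =>
  sub_nonneg.1 (exPosSum_sub_eq h ▸ sum_nonneg fun _ _ => one_div_nonneg.2 (Nat.cast_nonneg _))

theorem exPosSum_sub_le {p q t C : ℕ} (hC : C < t) (hq : q = exHalfCount (t * t)) (hqp : q ≤ p)
    (hwin : q < p → exBlockOf (p - 1) ≤ exBlockOf q + C) :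
    exPosSum p - exPosSum q ≤ (C + 1) / (t * t + 1) := by
  have hblk : exBlockOf q = t * t + 1 := hq ▸ exBlockOf_exHalfCount _
  have hlen : p - q ≤ C + 1 := by
    rcases hqp.eq_or_lt with rfl | hlt
    · omega
    have hp := (exBlockOf_spec (p - 1)).2.2
    have := exHalfCount_strictMono.monotone (show exBlockOf (p - 1) ≤ t * t + (C + 1) by
      have := hwin hlt; omega)
    rw [exHalfCount_mul_self_add (by omega)] at this
    omega
  rw [exPosSum_sub_eq hqp]
  calc ∑ j ∈ Ico q p, 1 / (exBlockOf j : ℝ)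
      ≤ ∑ _j ∈ Ico q p, 1 / ((t * t + 1 : ℕ) : ℝ) := sum_le_sum fun j hj =>
        one_div_le_one_div_of_le (by positivity)
          (Nat.cast_le.2 (hblk ▸ exBlockOf_mono (mem_Ico.1 hj).1))
    _ = (p - q : ℕ) / (t * t + 1) := by
        rw [sum_const, Nat.card_Ico, nsmul_eq_mul, mul_one_div]; push_cast; ring
    _ ≤ (C + 1) / (t * t + 1) := by gcongr; exact_mod_cast hlen

theorem abs_exPosSum_sub_le {p q t C : ℕ} (hC : C < t) (hmin : min p q = exHalfCount (t * t))
    (hpq : q < p → exBlockOf (p - 1) ≤ exBlockOf q + C)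
    (hqp : p < q → exBlockOf (q - 1) ≤ exBlockOf p + C) :
    |exPosSum p - exPosSum q| ≤ (C + 1) / (t * t + 1) := by
  rcases le_total q p with h | h
  · rw [abs_of_nonneg (sub_nonneg.2 (exPosSum_mono h))]
    exact exPosSum_sub_le hC (by omega) h hpq
  · rw [abs_sub_comm, abs_of_nonneg (sub_nonneg.2 (exPosSum_mono h))]
    exact exPosSum_sub_le hC (by omega) h hqp

theorem exists_abs_partialSum_le {σ : Equiv.Perm ℕ} {C t : ℕ} (hR : IsTypeR exA σ)
    (hB : HasBBN σ C) (ht : C < t) :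
    ∃ n, t ≤ n ∧ |partialSum (fun i => exA (σ i)) n| ≤ (C + 1) / (t * t + 1) := by
  have hQ : t ≤ exHalfCount (t * t) := (Nat.le_mul_self t).trans (le_exHalfCount _)
  obtain ⟨n, hn, hmin⟩ := exists_min_count_eq (p := fun i => 0 < exA (σ i))
    (q := fun i => exA (σ i) ≤ 0)
    (infinite_setOf_exA_pos.preimage fun x _ => σ.surjective x)
    (infinite_setOf_exA_nonpos.preimage fun x _ => σ.surjective x) (exHalfCount (t * t) - 1)
  have hblock := hB (n - 1)
  rw [Nat.sub_add_cancel (by omega), hR.image_range_eq_exFirst] at hblock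
  refine ⟨n, by omega, ?_⟩
  rw [partialSum_comp_perm, hR.image_range_eq_exFirst, sum_exFirst]
  exact abs_exPosSum_sub_le ht (by omega)
    (fun h => (exBlockOf_le_add_blockCount_exFirst_of_lt h).trans (by omega))
    (fun h => (exBlockOf_le_add_blockCount_exFirst_of_gt h).trans (by omega))

theorem eq_zero_of_isTypeR_of_hasBBN {σ : Equiv.Perm ℕ} {C : ℕ} {r : ℝ} (hR : IsTypeR exA σ)
    (hB : HasBBN σ C) (hconv : ConvergesTo (fun n => exA (σ n)) r) : r = 0 := by
  refine (eq_of_forall_dist_le fun ε hε => ?_).symm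
  have hbound : Tendsto (fun t : ℕ => ((C : ℝ) + 1) / (t * t + 1)) atTop (nhds 0) :=
    tendsto_const_nhds.div_atTop <| tendsto_atTop_mono
      (fun t : ℕ => by nlinarith [(t.cast_nonneg : (0 : ℝ) ≤ t)]) tendsto_natCast_atTop_atTop
  obtain ⟨N, hN⟩ := Metric.tendsto_atTop.1 hconv (ε / 2) (half_pos hε)
  obtain ⟨t, ht, htN⟩ := ((hbound.eventually (gt_mem_nhds (half_pos hε))).and
    (eventually_ge_atTop (max N (C + 1)))).exists
  obtain ⟨n, hn, hS⟩ := exists_abs_partialSum_le hR hB (show C < t by omega)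
  have hSr := hN n (by omega)
  calc dist 0 r ≤ dist 0 (partialSum (fun i => exA (σ i)) n) + dist _ r := dist_triangle _ _ _
    _ ≤ ε := by rw [dist_zero_left, Real.norm_eq_abs]; linarith

/-- For the example series, the set `Z_R` of sums attainable by
type R λ-permutations is exactly `{0}`. -/
theorem statement15 : ZR exA = {0} := by
  ext r
  refine ⟨fun ⟨σ, ⟨hR, ⟨C, hB⟩, _⟩, hconv⟩ => eq_zero_of_isTypeR_of_hasBBN hR hB hconv, ?_⟩
  rintro rfl
  exact zero_mem_ZR_exA
end
end
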